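/- For a path-connected pointed space (X, x_0), cat_m(X) = secat_m(e_X), where e_X : P_{x_0}X → X is the based path space fibration e_X(α) = α(1). -/

import Mathlib

universe u

section OldCWComplex

open CategoryTheory

namespace RelativeCWComplex

/-- A type witnessing that `X'` is obtained from `X` by attaching generalized cells `f : S ⟶ D`. -/
structure AttachGeneralizedCells {S D : TopCat.{u}} (f : S ⟶ D) (X X' : TopCat.{u}) where
  /-- The index type over the generalized cells -/
  cells : Type u
  /-- An attaching map for each generalized cell -/
  attachMaps : cells → (S ⟶ X)
  /-- `X'` is the pushout of `∐ S ⟶ X` and `∐ S ⟶ ∐ D`. -/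
  iso_pushout : X' ≅ Limits.pushout (Limits.Sigma.desc attachMaps) (Limits.Sigma.map fun _ ↦ f)

/-- The inclusion map from `X` to `X'`. -/
noncomputable def AttachGeneralizedCells.inclusion {S D : TopCat.{u}} {f : S ⟶ D}
    {X X' : TopCat.{u}} (att : AttachGeneralizedCells f X X') : X ⟶ X' :=
  Limits.pushout.inl _ _ ≫ att.iso_pushout.inv

end RelativeCWComplex

/-- Relative CW complex (old Mathlib definition): `sk (n + 1)` is obtained from `sk n`
by attaching `n`-disks. -/
structure RelativeCWComplex (A : TopCat.{u}) where
  /-- The skeletons. -/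
  sk : ℕ → TopCat.{u}
  /-- `A` is isomorphic to the (-1)-skeleton. -/
  iso_sk_zero : A ≅ sk 0
  /-- The `(n + 1)`-skeleton is obtained from the `n`-skeleton by attaching `n`-disks. -/
  attachCells (n : ℕ) :
    RelativeCWComplex.AttachGeneralizedCells (TopCat.diskBoundaryInclusion.{u} n) (sk n) (sk (n + 1))

namespace RelativeCWComplex

/-- The inclusion map from `sk n` to `sk (n + 1)`. -/
noncomputable def skInclusion {A : TopCat.{u}} (X : RelativeCWComplex.{u} A) (n : ℕ) :
    X.sk n ⟶ X.sk (n + 1) :=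
  (X.attachCells n).inclusion

/-- The topological space underlying a relative CW complex. -/
noncomputable def toTopCat {A : TopCat.{u}} (X : RelativeCWComplex.{u} A) : TopCat.{u} :=
  Limits.colimit (Functor.ofSequence X.skInclusion)

end RelativeCWComplex

/-- A CW complex is a relative CW complex whose `sk 0` is empty. -/
structure CWComplex extends RelativeCWComplex.{u} (TopCat.of PEmpty)

end OldCWComplex

/-- The underlying topological space of a CW complex. -/
abbrev CWSpace (K : CWComplex.{u}) : Type u := K.toRelativeCWComplex.toTopCat

/-- A CW complex has dimension at most `m` if it has no cells of dimension `> m`. -/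
def CWDimLE (K : CWComplex.{u}) (m : ℕ) : Prop :=
  ∀ n : ℕ, m < n →
    IsEmpty (RelativeCWComplex.AttachGeneralizedCells.cells (K.toRelativeCWComplex.attachCells n))

/-- Hurewicz fibration: the homotopy lifting property with respect to all spaces. -/
def IsFibration {E B : Type u} [TopologicalSpace E] [TopologicalSpace B] (p : C(E, B)) : Prop :=
  ∀ (X : Type u) [TopologicalSpace X] (f : C(X, E)) (H : C(X × unitInterval, B)),
    (∀ x, H (x, 0) = p (f x)) →
    ∃ H' : C(X × unitInterval, E), (∀ z, p (H' z) = H z) ∧ (∀ x, H' (x, 0) = f x)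

/-- The inclusion of a subset as a continuous map. -/
def inclMap {X : Type u} [TopologicalSpace X] (U : Set X) : C(U, X) :=
  ⟨Subtype.val, continuous_subtype_val⟩

/-- Property `A_{m,p}`: every map into `U` from an `m`-dimensional CW complex lifts through `p`. -/
def LiftingProp {E B : Type u} [TopologicalSpace E] [TopologicalSpace B]
    (p : C(E, B)) (m : ℕ) (U : Set B) : Prop :=
  ∀ K : CWComplex.{u}, CWDimLE K m → ∀ φ : C(CWSpace K, U),
    ∃ s : C(CWSpace K, E), ∀ x, p (s x) = (φ x : B)

/-- The `m`-sectional category of `p`, valued in `ℕ∞` (`⊤` if no finite cover exists). -/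
noncomputable def secatm {E B : Type u} [TopologicalSpace E] [TopologicalSpace B]
    (p : C(E, B)) (m : ℕ) : ℕ∞ :=
  sInf ((fun n : ℕ => (n : ℕ∞)) ''
    {k : ℕ | ∃ U : Fin (k + 1) → Set B, (∀ i, IsOpen (U i)) ∧ (⋃ i, U i) = Set.univ ∧
      ∀ i, LiftingProp p m (U i)})

/-- The classical sectional category. -/
noncomputable def secat {E B : Type u} [TopologicalSpace E] [TopologicalSpace B]
    (p : C(E, B)) : ℕ∞ :=
  sInf ((fun n : ℕ => (n : ℕ∞)) ''
    {k : ℕ | ∃ U : Fin (k + 1) → Set B, (∀ i, IsOpen (U i)) ∧ (⋃ i, U i) = Set.univ ∧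
      ∀ i, ∃ s : C((U i : Set B), E), ∀ x, p (s x) = (x : B)})

/-- Property `B_m`. -/
def NullProp {X : Type u} [TopologicalSpace X] (m : ℕ) (U : Set X) : Prop :=
  ∀ K : CWComplex.{u}, CWDimLE K m → ∀ φ : C(CWSpace K, U),
    ((inclMap U).comp φ).Nullhomotopic

/-- The `m`-dimensional Lusternik–Schnirelmann category. -/
noncomputable def catm (X : Type u) [TopologicalSpace X] (m : ℕ) : ℕ∞ :=
  sInf ((fun n : ℕ => (n : ℕ∞)) ''
    {k : ℕ | ∃ U : Fin (k + 1) → Set X, (∀ i, IsOpen (U i)) ∧ (⋃ i, U i) = Set.univ ∧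
      ∀ i, NullProp m (U i)})

/-- Classical (normalized) LS category. -/
noncomputable def catLS (X : Type u) [TopologicalSpace X] : ℕ∞ :=
  sInf ((fun n : ℕ => (n : ℕ∞)) ''
    {k : ℕ | ∃ U : Fin (k + 1) → Set X, (∀ i, IsOpen (U i)) ∧ (⋃ i, U i) = Set.univ ∧
      ∀ i, (inclMap (U i)).Nullhomotopic})

/-- Property `C_{m,f}`. -/
def NullPropMap {X Y : Type u} [TopologicalSpace X] [TopologicalSpace Y]
    (f : C(X, Y)) (m : ℕ) (U : Set X) : Prop :=
  ∀ K : CWComplex.{u}, CWDimLE K m → ∀ φ : C(CWSpace K, U),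
    ((f.comp (inclMap U)).comp φ).Nullhomotopic

/-- The `m`-dimensional LS category of a map. -/
noncomputable def catmMap {X Y : Type u} [TopologicalSpace X] [TopologicalSpace Y]
    (f : C(X, Y)) (m : ℕ) : ℕ∞ :=
  sInf ((fun n : ℕ => (n : ℕ∞)) ''
    {k : ℕ | ∃ U : Fin (k + 1) → Set X, (∀ i, IsOpen (U i)) ∧ (⋃ i, U i) = Set.univ ∧
      ∀ i, NullPropMap f m (U i)})

/-- Property `D_{m,f,g}`. -/
def DistProp {X Y : Type u} [TopologicalSpace X] [TopologicalSpace Y]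
    (f g : C(X, Y)) (m : ℕ) (U : Set X) : Prop :=
  ∀ K : CWComplex.{u}, CWDimLE K m → ∀ φ : C(CWSpace K, U),
    ((f.comp (inclMap U)).comp φ).Homotopic ((g.comp (inclMap U)).comp φ)

/-- The `m`-homotopic distance. -/
noncomputable def homDistm {X Y : Type u} [TopologicalSpace X] [TopologicalSpace Y]
    (f g : C(X, Y)) (m : ℕ) : ℕ∞ :=
  sInf ((fun n : ℕ => (n : ℕ∞)) ''
    {k : ℕ | ∃ U : Fin (k + 1) → Set X, (∀ i, IsOpen (U i)) ∧ (⋃ i, U i) = Set.univ ∧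
      ∀ i, DistProp f g m (U i)})

/-- The based path space of `(X, x₀)`. -/
def BasedPathSpace (X : Type u) [TopologicalSpace X] (x₀ : X) : Type u :=
  {γ : C(unitInterval, X) // γ 0 = x₀}

instance (X : Type u) [TopologicalSpace X] (x₀ : X) : TopologicalSpace (BasedPathSpace X x₀) :=
  instTopologicalSpaceSubtype

/-- The based path space fibration `e_X(γ) = γ(1)`. -/
def pathFibration (X : Type u) [TopologicalSpace X] (x₀ : X) : C(BasedPathSpace X x₀, X) :=
  ⟨fun γ => γ.1 1, (continuous_eval_const 1).comp continuous_subtype_val⟩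

lemma nullProp_iff_liftingProp {X : Type u} [TopologicalSpace X] [PathConnectedSpace X]
    (x₀ : X) (m : ℕ) (U : Set X) :
    NullProp m U ↔ LiftingProp (pathFibration X x₀) m U := by
  constructor
  · intro h K hK φ
    obtain ⟨y, hy⟩ := h K hK φ
    obtain ⟨H⟩ := hy
    obtain ⟨δ⟩ := PathConnectedSpace.joined x₀ y
    set u : C(ℝ, unitInterval) := ⟨Set.projIcc 0 1 zero_le_one, continuous_projIcc⟩ with hu
    have hf1 : Continuous (fun p : CWSpace K × unitInterval => δ.extend (2 * (p.2 : ℝ))) :=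
      δ.continuous_extend.comp (continuous_const.mul (continuous_subtype_val.comp continuous_snd))
    have hf2 : Continuous (fun p : CWSpace K × unitInterval =>
        H (u (2 - 2 * (p.2 : ℝ)), p.1)) := by
      refine H.continuous.comp ((u.continuous.comp ?_).prodMk continuous_fst)
      exact continuous_const.sub (continuous_const.mul
        (continuous_subtype_val.comp continuous_snd))
    have hfr : ∀ p : CWSpace K × unitInterval, ((p.2 : ℝ) = 1/2) →
        δ.extend (2 * (p.2 : ℝ)) = H (u (2 - 2 * (p.2 : ℝ)), p.1) := by
      intro p hp
      rw [hp]
      norm_num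
      have h1 : u (1 : ℝ) = 1 := by
        simp [hu, Set.projIcc]
      rw [h1]
      exact (H.apply_one p.1).symm
    let F : C(CWSpace K × unitInterval, X) :=
      ⟨fun p => if (p.2 : ℝ) ≤ 1/2 then δ.extend (2 * (p.2 : ℝ))
        else H (u (2 - 2 * (p.2 : ℝ)), p.1),
       Continuous.if_le hf1 hf2 (continuous_subtype_val.comp continuous_snd)
        continuous_const hfr⟩
    have hstart : ∀ x : CWSpace K, F.curry x 0 = x₀ := by
      intro x
      show F (x, 0) = x₀
      have : ((0 : unitInterval) : ℝ) ≤ 1/2 := by norm_num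
      simp only [F, ContinuousMap.coe_mk, this, if_pos]
      norm_num
    refine ⟨⟨fun x => ⟨F.curry x, hstart x⟩, ?_⟩, ?_⟩
    · exact Continuous.subtype_mk F.curry.continuous _
    · intro x
      show F (x, 1) = (φ x : X)
      have h1 : ¬ (((1 : unitInterval) : ℝ) ≤ 1/2) := by norm_num
      simp only [F, ContinuousMap.coe_mk, h1, if_neg, not_false_iff]
      have h0 : u (2 - 2 * ((1 : unitInterval) : ℝ)) = 0 := by
        simp [hu, Set.projIcc]
      rw [h0, H.apply_zero]
      rfl
  · intro h K hK φ
    obtain ⟨s, hs⟩ := h K hK φ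
    refine ⟨x₀, ⟨?_⟩⟩
    refine
      { toFun := fun p => (s p.2).1 (unitInterval.symm p.1)
        continuous_toFun := ?_
        map_zero_left := ?_
        map_one_left := ?_ }
    · have hcs : Continuous (fun x : CWSpace K => (s x).1) :=
        continuous_subtype_val.comp s.continuous
      exact continuous_eval.comp
        ((hcs.comp continuous_snd).prodMk (unitInterval.continuous_symm.comp continuous_fst))
    · intro x
      simp only [unitInterval.symm_zero]
      exact hs x
    · intro x
      simp only [unitInterval.symm_one]
      exact (s x).2

/-- `cat_m(X) = secat_m(e_X)` for a path-connected pointed space. -/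
theorem stmt9 {X : Type u} [TopologicalSpace X] [PathConnectedSpace X] (x₀ : X) (m : ℕ) :
    catm X m = secatm (pathFibration X x₀) m := by
  unfold catm secatm
  have h : ∀ U : Set X, NullProp m U = LiftingProp (pathFibration X x₀) m U :=
    fun U => propext (nullProp_iff_liftingProp x₀ m U)
  simp only [h]
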